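/- Let c₀, α₀ be positive real numbers, γ₀ = 2c₀/α₀ + 1, P(q) = (c₀²/γ₀) q^{γ₀}, and let A ≥ 0 and q₀ > 0. Then the Rankine–Hugoniot speed function F(q_s) = (A/2)·(q_s − q₀)/q_s + ((q_s + q₀)/2)·√((P(q_s) − P(q₀))/(q_s q₀ (q_s − q₀))) is strictly increasing on the interval (q₀, ∞). -/

import Mathlib

/-!
Write `S(q) = (P q - P q₀) / (q - q₀)` for the secant slope of the pressure through `q₀` and
`H(q) = (q + q₀)² / (4 q q₀)`. Then the square-root term of `F` is `√(S q · H q)`. Convexity of `P`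
makes `S` strictly increasing, monotonicity of `P` makes it nonnegative, and
`4 q₀ H(q) = q + 2 q₀ + q₀² / q` is strictly increasing for `q > q₀`; so the square-root term is
strictly increasing, while the first term `(A/2)(1 - q₀/q)` is nondecreasing because `A ≥ 0`.
-/

open Set Real

lemma StrictConvexOn.const_mul {E : Type*} [AddCommMonoid E] [Module ℝ E] {s : Set E}
    {f : E → ℝ} {c : ℝ} (hf : StrictConvexOn ℝ s f) (hc : 0 < c) :
    StrictConvexOn ℝ s fun x => c * f x :=
  ⟨hf.1, fun _ hx _ hy hxy _ _ ha hb hab => by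
    simpa only [smul_eq_mul, mul_add, mul_left_comm c] using
      mul_lt_mul_of_pos_left (hf.2 hx hy hxy ha hb hab) hc⟩

lemma StrictConvexOn.slope_strictMono {𝕜 : Type*} [Field 𝕜] [LinearOrder 𝕜]
    [IsStrictOrderedRing 𝕜] {s : Set 𝕜} {f : 𝕜 → 𝕜} {x : 𝕜} (hf : StrictConvexOn 𝕜 s f)
    (hx : x ∈ s) : StrictMonoOn (slope f x) (s \ {x}) :=
  (slope_fun_def_field f _).symm ▸ fun _ hy _ hz hyz => hf.secant_strict_mono hx
    (mem_of_mem_sdiff hy) (mem_of_mem_sdiff hz) (notMem_of_mem_sdiff hy :)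
    (notMem_of_mem_sdiff hz :) hyz

lemma StrictMonoOn.mul_of_nonneg {α β : Type*} [Semiring α] [PartialOrder α]
    [IsStrictOrderedRing α] [Preorder β] {f g : β → α} {s : Set β} (hf : StrictMonoOn f s)
    (hg : StrictMonoOn g s) (hf₀ : ∀ x ∈ s, 0 ≤ f x) (hg₀ : ∀ x ∈ s, 0 ≤ g x) :
    StrictMonoOn (fun x => f x * g x) s :=
  fun x hx _ hy hxy => mul_lt_mul'' (hf hx hy hxy) (hg hx hy hxy) (hf₀ x hx) (hg₀ x hx)

lemma monotoneOn_sub_div_self {a : ℝ} (ha : 0 ≤ a) : MonotoneOn (fun q => (q - a) / q) (Ioi 0) := by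
  intro x (hx : 0 < x) y (hy : 0 < y) hxy
  simp only [sub_div, div_self hx.ne', div_self hy.ne']
  gcongr

lemma strictMonoOn_add_sq_div {a : ℝ} (ha : 0 < a) :
    StrictMonoOn (fun q => (q + a) ^ 2 / (4 * q * a)) (Ioi a) := by
  intro x hx y hy hxy
  have hx₀ : 0 < x := ha.trans hx
  have hy₀ : 0 < y := ha.trans hy
  rw [div_lt_div_iff₀ (by positivity) (by positivity)]
  have hgap : 0 < (y - x) * (x * y - a * a) :=
    mul_pos (sub_pos.2 hxy) (sub_pos.2 (mul_lt_mul'' hx hy ha.le ha.le))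
  nlinarith

noncomputable def shockSpeed (P : ℝ → ℝ) (A q₀ qs : ℝ) : ℝ :=
  A / 2 * ((qs - q₀) / qs) + (qs + q₀) / 2 * √((P qs - P q₀) / (qs * q₀ * (qs - q₀)))

lemma shockSpeed_eq (P : ℝ → ℝ) (A : ℝ) {q₀ qs : ℝ} (h : 0 ≤ qs + q₀) :
    shockSpeed P A q₀ qs =
      A / 2 * ((qs - q₀) / qs) + √(slope P q₀ qs * ((qs + q₀) ^ 2 / (4 * qs * q₀))) := by
  -- abstracting `qs - q₀` lets `ring` split the inverse of the product `qs * q₀ * (qs - q₀)`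
  have hregroup : ∀ d, (P qs - P q₀) / d * ((qs + q₀) ^ 2 / (4 * qs * q₀))
      = ((qs + q₀) / 2) ^ 2 * ((P qs - P q₀) / (qs * q₀ * d)) := fun d => by ring
  rw [shockSpeed, slope_def_field, hregroup, sqrt_mul (sq_nonneg _), sqrt_sq (by linarith)]

theorem strictMonoOn_shockSpeed {P : ℝ → ℝ} {A q₀ : ℝ} (hA : 0 ≤ A) (hq₀ : 0 < q₀)
    (hconv : StrictConvexOn ℝ (Ici q₀) P) (hmono : MonotoneOn P (Ici q₀)) :
    StrictMonoOn (shockSpeed P A q₀) (Ioi q₀) := by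
  have hslope : StrictMonoOn (slope P q₀) (Ioi q₀) :=
    (hconv.slope_strictMono self_mem_Ici).mono fun _ hq => ⟨Ioi_subset_Ici_self hq, ne_of_gt hq⟩
  have hslope₀ : ∀ q ∈ Ioi q₀, 0 ≤ slope P q₀ q := fun _ hq =>
    hmono.slope_nonneg self_mem_Ici (Ioi_subset_Ici_self hq)
  have hfactor₀ : ∀ q ∈ Ioi q₀, 0 ≤ (q + q₀) ^ 2 / (4 * q * q₀) := fun q (hq : q₀ < q) => by
    have : 0 < q := hq₀.trans hq
    positivity
  have hroot : StrictMonoOn (fun q => √(slope P q₀ q * ((q + q₀) ^ 2 / (4 * q * q₀)))) (Ioi q₀) :=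
    strictMonoOn_sqrt.comp (hslope.mul_of_nonneg (strictMonoOn_add_sq_div hq₀) hslope₀ hfactor₀)
      fun q hq => mul_nonneg (hslope₀ q hq) (hfactor₀ q hq)
  have hlinear : MonotoneOn (fun q => A / 2 * ((q - q₀) / q)) (Ioi q₀) := fun x hx y hy hxy =>
    mul_le_mul_of_nonneg_left
      (monotoneOn_sub_div_self hq₀.le (hq₀.trans hx) (hq₀.trans hy) hxy) (by positivity)
  exact (hlinear.add_strictMono hroot).congr fun q (hq : q₀ < q) =>
    (shockSpeed_eq P A (by linarith)).symm

/-- The Rankine–Hugoniot shock speed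
`F(qs) = (A/2)(qs − q₀)/qs + ((qs + q₀)/2) √((P(qs) − P(q₀))/(qs q₀ (qs − q₀)))`
is strictly increasing in `qs` on `(q₀, ∞)`, where `P(q) = (c₀²/γ₀) q^γ₀` and
`γ₀ = 2c₀/α₀ + 1`. -/
theorem shock_speed_strictMono (c₀ α₀ : ℝ) (hc₀ : 0 < c₀) (hα₀ : 0 < α₀)
    (γ₀ : ℝ) (hγ₀ : γ₀ = 2 * c₀ / α₀ + 1)
    (P : ℝ → ℝ) (hP : P = fun q : ℝ => c₀ ^ 2 / γ₀ * q ^ γ₀)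
    (A q₀ : ℝ) (hA : 0 ≤ A) (hq₀ : 0 < q₀)
    (F : ℝ → ℝ)
    (hF : F = fun qs =>
      A / 2 * ((qs - q₀) / qs)
        + (qs + q₀) / 2 * Real.sqrt ((P qs - P q₀) / (qs * q₀ * (qs - q₀)))) :
    StrictMonoOn F (Set.Ioi q₀) := by
  have hγ : 1 < γ₀ := by
    rw [hγ₀]
    linarith [div_pos (mul_pos two_pos hc₀) hα₀]
  have hcoeff : 0 < c₀ ^ 2 / γ₀ := by positivity
  have hsub : Ici q₀ ⊆ Ici 0 := Ici_subset_Ici.2 hq₀.le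
  have hconv : StrictConvexOn ℝ (Ici q₀) P :=
    hP ▸ ((strictConvexOn_rpow hγ).const_mul hcoeff).subset hsub (convex_Ici q₀)
  have hmono : MonotoneOn P (Ici q₀) := hP ▸ fun x hx y _ hxy =>
    mul_le_mul_of_nonneg_left (rpow_le_rpow (hsub hx) hxy (by linarith)) hcoeff.le
  exact hF ▸ strictMonoOn_shockSpeed hA hq₀ hconv hmono
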